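/- arXiv:2201.08654 — 7 statements merged into one kernel-verified Lean document; each statement's English description precedes it below -/
import Mathlib

section
/- Let G be a finite nilpotent group of nilpotency class 2, i.e. G is nonabelian and the quotient G/Z(G) of G by its center is abelian. Then every irreducible unitary representation of G on a nontrivial finite-dimensional complex Hilbert space does phase retrieval. -/
/-!
Since `G / Z(G)` is abelian, commutators are central and act by scalars (Schur), so
`π (g⁻¹ h g) = χ_g(h) π h` for characters `χ_g` of `G`. Choose `η` with `⟪π h η, η⟫ ≠ 0` for all
`h`: each of these finitely many conditions defines a dense open set. If `f` and `f'` have inner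
products of equal modulus with the orbit of `η`, the operator `T = f ⊗ f* - f' ⊗ f'*` satisfies
`⟪T (π g η), π g η⟫ = 0` for all `g`. By Schur's lemma `∑ g, π g⁻¹ T π h π g` is a scalar, which
the choice of `η` forces to be `0`; that is, the twisted averages `∑ g, χ_g(h) π g⁻¹ T π g` vanish.
Summing over `h`, orthogonality of characters leaves a nonzero multiple of `T`. Hence `T = 0`,
i.e. `f ⊗ f* = f' ⊗ f'*`, so `f = c f'` with `|c| = 1`.
-/

def DoesPhaseRetrieval {H : Type*} [NormedAddCommGroup H] [InnerProductSpace ℂ H]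
    {I : Type*} (x : I → H) : Prop :=
  ∀ f g : H, (∀ i : I, ‖(inner ℂ f (x i) : ℂ)‖ = ‖(inner ℂ g (x i) : ℂ)‖) →
    ∃ c : ℂ, ‖c‖ = 1 ∧ f = c • g

open Filter Topology InnerProductSpace Finset

theorem exists_norm_eq_one_smul_of_rankOne_self_eq {𝕜 E : Type*} [RCLike 𝕜]
    [NormedAddCommGroup E] [InnerProductSpace 𝕜 E] {f g : E}
    (h : rankOne 𝕜 f f = rankOne 𝕜 g g) : ∃ c : 𝕜, ‖c‖ = 1 ∧ f = c • g := by
  have hnorm : ‖f‖ = ‖g‖ := by simpa [← sq] using congr(‖$h‖)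
  rcases eq_or_ne g 0 with rfl | hg
  · exact ⟨1, by simp, by simpa using hnorm⟩
  have hf : f ≠ 0 := norm_ne_zero_iff.1 (hnorm ▸ norm_ne_zero_iff.2 hg)
  obtain ⟨c, -, -, -, hfc, -⟩ := exists_of_rankOne_eq_rankOne hf hf h
  refine ⟨c, ?_, hfc⟩
  rw [hfc, norm_smul] at hnorm
  exact (mul_eq_right₀ (norm_ne_zero_iff.2 hg)).1 hnorm

section InnerProduct

variable {H : Type*} [NormedAddCommGroup H] [InnerProductSpace ℂ H]

theorem doesPhaseRetrieval_of_forall_inner_map_self_eq_zero {I : Type*} {x : I → H}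
    (hx : ∀ T : H →L[ℂ] H, (∀ i, inner ℂ (T (x i)) (x i) = 0) → T = 0) :
    DoesPhaseRetrieval x := by
  intro f g hfg
  refine exists_norm_eq_one_smul_of_rankOne_self_eq (sub_eq_zero.1 (hx _ fun i => ?_))
  simp only [sub_apply, rankOne_apply, inner_sub_left, inner_smul_left,
    ← Complex.normSq_eq_conj_mul_self, Complex.normSq_eq_norm_sq, hfg i, sub_self]

theorem dense_setOf_inner_map_self_ne_zero {A : H →L[ℂ] H} (hA : A ≠ 0) :
    Dense {v : H | inner ℂ (A v) v ≠ 0} := by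
  refine interior_eq_empty_iff_dense_compl.1 (Set.eq_empty_iff_forall_notMem.2 fun x hx => ?_)
  apply hA
  refine ContinuousLinearMap.coe_injective <| (inner_map_self_eq_zero _).1 fun d => ?_
  have hline : Tendsto (fun t : ℂ => (x + t • d, x - t • d)) (𝓝[≠] 0) (𝓝 x ×ˢ 𝓝 x) := by
    rw [← nhds_prod_eq]
    refine tendsto_nhdsWithin_of_tendsto_nhds ?_
    convert (by fun_prop : Continuous fun t : ℂ => (x + t • d, x - t • d)).tendsto 0 using 2
    simp
  have hZ : {v : H | inner ℂ (A v) v = 0} ∈ 𝓝 x := mem_interior_iff_mem_nhds.1 hx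
  obtain ⟨t, ⟨hplus, hminus⟩, ht⟩ :=
    ((hline.eventually (prod_mem_prod hZ hZ)).and self_mem_nhdsWithin).exists
  have hx0 : inner ℂ (A x) x = 0 := (mem_of_mem_nhds hZ : x ∈ {v : H | inner ℂ (A v) v = 0})
  simp only [Set.mem_ofPred_eq, map_add, map_sub, map_smul, inner_add_left, inner_add_right,
    inner_sub_left, inner_sub_right, inner_smul_left, inner_smul_right] at hplus hminus
  -- the terms linear in `t` cancel between `x + t • d` and `x - t • d`
  have : (starRingEnd ℂ t * t) * inner ℂ (A d) d = 0 := by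
    linear_combination (hplus + hminus) / 2 - hx0
  have ht : t ≠ 0 := ht
  exact (mul_eq_zero.1 this).resolve_left (mul_ne_zero ((map_ne_zero _).2 ht) ht)

theorem exists_forall_inner_map_self_ne_zero [CompleteSpace H] {ι : Type*} [Countable ι]
    {A : ι → H →L[ℂ] H} (hA : ∀ i, A i ≠ 0) : ∃ η : H, ∀ i, inner ℂ (A i η) η ≠ 0 := by
  have hdense := dense_iInter_of_isOpen (fun i => isOpen_ne_fun (by fun_prop) continuous_const)
    fun i => dense_setOf_inner_map_self_ne_zero (hA i)
  simpa using hdense.nonempty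

end InnerProduct

namespace Representation

variable {G k V : Type*} [Group G] [Field k] [AddCommGroup V] [Module k V]
  (ρ : Representation k G V)

theorem isIrreducible_of_forall_submodule [Nontrivial V]
    (h : ∀ W : Submodule k V, (∀ g, ∀ v ∈ W, ρ g v ∈ W) → W = ⊥ ∨ W = ⊤) : ρ.IsIrreducible where
  exists_pair_ne := ⟨⊥, ⊤, fun h => bot_ne_top congr(Subrepresentation.toSubmodule $h)⟩
  eq_bot_or_eq_top σ := (h σ.toSubmodule fun g _ hv => σ.apply_mem_toSubmodule g hv).imp
    (fun h => Subrepresentation.ext h) fun h => Subrepresentation.ext h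

theorem IsIrreducible.exists_eq_smul_one [IsAlgClosed k] [FiniteDimensional k V] [ρ.IsIrreducible]
    {X : Module.End k V} (hX : ∀ g, Commute X (ρ g)) : ∃ c : k, X = c • 1 := by
  obtain ⟨c, hc⟩ := (IsIrreducible.algebraMap_intertwiningMap_bijective_of_isAlgClosed (ρ := ρ)).2
    (X.intertwiningMap_of_isIntertwiningMap ρ ρ fun g v => congr($(hX g) v))
  exact ⟨c, by ext v; exact congr($hc v).symm⟩

theorem inv_mul_self (g : G) : ρ g⁻¹ * ρ g = 1 := by rw [← map_mul, inv_mul_cancel, map_one]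

theorem mul_inv_self (g : G) : ρ g * ρ g⁻¹ = 1 := by rw [← map_mul, mul_inv_cancel, map_one]

theorem smul_left_injective [Nontrivial V] (g : G) : Function.Injective fun c : k => c • ρ g :=
  _root_.smul_left_injective k fun h => one_ne_zero (by rw [← ρ.inv_mul_self g, h, mul_zero])

section ConjSum

variable [Fintype G]

def conjSum (X : Module.End k V) : Module.End k V := ∑ g, ρ g⁻¹ * X * ρ g

theorem commute_conjSum (X : Module.End k V) (h : G) : Commute (ρ.conjSum X) (ρ h) := by
  have := Fintype.sum_equiv (Equiv.mulRight h) (fun g => ρ g⁻¹ * X * ρ g * ρ h)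
    (fun g => ρ h * (ρ g⁻¹ * X * ρ g)) fun g => by
      simp only [Equiv.coe_mulRight, mul_inv_rev, map_mul, ← mul_assoc]
      rw [← map_mul ρ h, mul_inv_cancel, map_one, one_mul]
  simpa [Commute, SemiconjBy, conjSum, Finset.sum_mul, Finset.mul_sum] using this

theorem conjSum_mul_eq (χ : G → G →* k) (hχ : ∀ g h, ρ (g⁻¹ * h * g) = χ g h • ρ h)
    (T : Module.End k V) (h : G) :
    ρ.conjSum (T * ρ h) = (∑ g, χ g h • (ρ g⁻¹ * T * ρ g)) * ρ h := by
  rw [conjSum, Finset.sum_mul]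
  refine Finset.sum_congr rfl fun g _ => ?_
  have hconj : ρ h * ρ g = ρ g * ρ (g⁻¹ * h * g) := by
    rw [← map_mul, ← map_mul]
    group
  rw [smul_mul_assoc, ← mul_smul_comm, ← hχ, mul_assoc (ρ g⁻¹ * T), ← hconj]
  simp only [mul_assoc]

end ConjSum

section ClassTwo

variable [IsAlgClosed k] [FiniteDimensional k V] [ρ.IsIrreducible]

theorem exists_eq_smul_one_of_mem_center {z : G} (hz : z ∈ Subgroup.center G) :
    ∃ c : k, ρ z = c • 1 :=
  IsIrreducible.exists_eq_smul_one ρ fun g => by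
    rw [Commute, SemiconjBy, ← map_mul, ← map_mul, Subgroup.mem_center_iff.1 hz g]

theorem exists_conj_eq_smul (hclass2 : ∀ a b : G ⧸ Subgroup.center G, a * b = b * a)
    (g h : G) : ∃ c : k, ρ (g⁻¹ * h * g) = c • ρ h := by
  have hz : h⁻¹ * (g⁻¹ * h * g) ∈ Subgroup.center G := by
    rw [← QuotientGroup.eq, QuotientGroup.mk_mul, QuotientGroup.mk_mul, QuotientGroup.mk_inv,
      hclass2 (↑g)⁻¹ ↑h, inv_mul_cancel_right]
  obtain ⟨c, hc⟩ := ρ.exists_eq_smul_one_of_mem_center hz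
  refine ⟨c, ?_⟩
  rw [← mul_inv_cancel_left h (g⁻¹ * h * g), map_mul, hc, mul_smul_one]

theorem exists_conjCharacter [Nontrivial V]
    (hclass2 : ∀ a b : G ⧸ Subgroup.center G, a * b = b * a) :
    ∃ χ : G → G →* k, ∀ g h, ρ (g⁻¹ * h * g) = χ g h • ρ h := by
  choose χ hχ using ρ.exists_conj_eq_smul hclass2
  refine ⟨fun g => { toFun := χ g, map_one' := ?_, map_mul' := fun h₁ h₂ => ?_ }, hχ⟩
  · apply ρ.smul_left_injective 1
    dsimp only
    rw [← hχ, mul_one, inv_mul_cancel, one_smul]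
  · apply ρ.smul_left_injective (h₁ * h₂)
    dsimp only
    rw [← hχ, show g⁻¹ * (h₁ * h₂) * g = (g⁻¹ * h₁ * g) * (g⁻¹ * h₂ * g) by group, map_mul, hχ, hχ,
      smul_mul_smul_comm, map_mul]

section ConjCharacter

variable (χ : G → G →* k) (hχ : ∀ g h, ρ (g⁻¹ * h * g) = χ g h • ρ h)
include hχ

theorem conj_eq_self_of_conjCharacter_eq_one {g : G} (hg : χ g = 1) (T : Module.End k V) :
    ρ g⁻¹ * T * ρ g = T := by
  obtain ⟨c, hc⟩ := IsIrreducible.exists_eq_smul_one ρ (X := ρ g) fun h => by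
    have hgh := hχ g h
    rw [hg, MonoidHom.one_apply, one_smul, map_mul, map_mul] at hgh
    rw [Commute, SemiconjBy]
    conv_lhs => rw [← hgh]
    simp only [← mul_assoc, mul_inv_self, one_mul]
  have hcomm : Commute (ρ g) T := hc ▸ (Commute.one_left T).smul_left c
  rw [mul_assoc, ← hcomm.eq, ← mul_assoc, inv_mul_self, one_mul]

open Classical in
theorem sum_sum_smul_conj [Fintype G] (T : Module.End k V) :
    ∑ h, ∑ g, χ g h • (ρ g⁻¹ * T * ρ g) = (Fintype.card G * #{g | χ g = 1} : k) • T := by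
  rw [Finset.sum_comm]
  have hterm (g : G) : ((if χ g = 1 then Fintype.card G else 0 : ℕ) : k) • (ρ g⁻¹ * T * ρ g) =
      if χ g = 1 then (Fintype.card G : k) • T else 0 := by
    split_ifs with hg
    · rw [ρ.conj_eq_self_of_conjCharacter_eq_one χ hχ hg]
    · rw [Nat.cast_zero, zero_smul]
  simp_rw [← Finset.sum_smul, sum_hom_units, hterm]
  rw [Finset.sum_ite, Finset.sum_const_zero, add_zero, Finset.sum_const,
    ← Nat.cast_smul_eq_nsmul k, smul_smul, mul_comm]

end ConjCharacter

end ClassTwo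

end Representation

namespace Representation

section Unitary

variable {G 𝕜 H : Type*} [Group G] [RCLike 𝕜] [NormedAddCommGroup H] [InnerProductSpace 𝕜 H]
  (π : G →* (H ≃ₗᵢ[𝕜] H))

def ofUnitary : Representation 𝕜 G H where
  toFun g := (π g).toLinearEquiv.toLinearMap
  map_one' := by ext; simp
  map_mul' _ _ := by ext; simp

@[simp]
theorem ofUnitary_apply (g : G) (v : H) : ofUnitary π g v = π g v := rfl

end Unitary

section UnitaryClassTwo

variable {G H : Type*} [Group G] [NormedAddCommGroup H] [InnerProductSpace ℂ H]
  (π : G →* (H ≃ₗᵢ[ℂ] H)) [FiniteDimensional ℂ H] [(ofUnitary π).IsIrreducible]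

theorem sum_smul_conj_ofUnitary_eq_zero [Fintype G] (χ : G → G →* ℂ)
    (hχ : ∀ g h, ofUnitary π (g⁻¹ * h * g) = χ g h • ofUnitary π h)
    {η : H} (hη : ∀ h, inner ℂ (π h η) η ≠ 0)
    {T : Module.End ℂ H} (hT : ∀ g, inner ℂ (T (π g η)) (π g η) = 0) (h : G) :
    ∑ g, χ g h • (ofUnitary π g⁻¹ * T * ofUnitary π g) = 0 := by
  set ρ := ofUnitary π
  set E := ∑ g, χ g h • (ρ g⁻¹ * T * ρ g)
  obtain ⟨c, hc⟩ := IsIrreducible.exists_eq_smul_one ρ (ρ.commute_conjSum (T * ρ h))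
  rw [ρ.conjSum_mul_eq χ hχ] at hc
  have hE : E = c • ρ h⁻¹ := by
    rw [← mul_one E, ← ρ.mul_inv_self h, ← mul_assoc, hc, smul_one_mul]
  have hEη : inner ℂ (E η) η = 0 := by
    simp only [E, LinearMap.sum_apply, sum_inner, LinearMap.smul_apply, inner_smul_left,
      Module.End.mul_apply]
    refine sum_eq_zero fun g _ => ?_
    simp [ρ, LinearIsometryEquiv.inner_map_eq_flip, hT]
  rw [hE, LinearMap.smul_apply, inner_smul_left, ofUnitary_apply, mul_eq_zero, map_eq_zero] at hEη
  rw [hE, hEη.resolve_right (hη h⁻¹), zero_smul]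

theorem eq_zero_of_forall_inner_orbit_eq_zero [Finite G] [Nontrivial H]
    (hclass2 : ∀ a b : G ⧸ Subgroup.center G, a * b = b * a)
    {η : H} (hη : ∀ h, inner ℂ (π h η) η ≠ 0)
    {T : Module.End ℂ H} (hT : ∀ g, inner ℂ (T (π g η)) (π g η) = 0) : T = 0 := by
  classical
  have := Fintype.ofFinite G
  obtain ⟨χ, hχ⟩ := (ofUnitary π).exists_conjCharacter hclass2
  have hχ1 : χ 1 = 1 :=
    MonoidHom.ext fun h => (ofUnitary π).smul_left_injective h (by simp [← hχ])
  have hsum := (ofUnitary π).sum_sum_smul_conj χ hχ T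
  rw [sum_eq_zero fun h _ => sum_smul_conj_ofUnitary_eq_zero π χ hχ hη hT h, eq_comm,
    smul_eq_zero] at hsum
  refine hsum.resolve_left (mul_ne_zero ?_ ?_)
  · exact_mod_cast Fintype.card_ne_zero
  · exact_mod_cast (card_pos.2 ⟨1, by simpa using hχ1⟩).ne'

end UnitaryClassTwo

end Representation

theorem phase_retrieval_class_two_nilpotent_general
    {G : Type*} [Group G] [Finite G]
    (hclass2 : ∀ a b : G ⧸ Subgroup.center G, a * b = b * a)
    {H : Type*} [NormedAddCommGroup H] [InnerProductSpace ℂ H]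
    [FiniteDimensional ℂ H] [Nontrivial H]
    (π : G →* (H ≃ₗᵢ[ℂ] H))
    (hirr : ∀ V : Submodule ℂ H, (∀ g : G, ∀ v ∈ V, π g v ∈ V) → V = ⊥ ∨ V = ⊤) :
    ∃ η : H, DoesPhaseRetrieval (fun g : G => π g η) := by
  have := (Representation.ofUnitary π).isIrreducible_of_forall_submodule hirr
  obtain ⟨η, hη⟩ := exists_forall_inner_map_self_ne_zero
    (A := fun g : G => ((π g).toContinuousLinearEquiv : H →L[ℂ] H)) fun g h0 =>
      (exists_ne (0 : H)).elim fun v hv => hv ((π g).map_eq_zero_iff.1 congr($h0 v))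
  refine ⟨η, doesPhaseRetrieval_of_forall_inner_map_self_eq_zero fun T hT => ?_⟩
  exact ContinuousLinearMap.coe_injective
    (Representation.eq_zero_of_forall_inner_orbit_eq_zero π hclass2 hη hT)

/-- Every irreducible unitary representation of a finite nilpotent group of nilpotency
class 2 (i.e. a nonabelian group `G` with `G/Z(G)` abelian) on a nontrivial
finite-dimensional complex Hilbert space does phase retrieval. -/
theorem phase_retrieval_class_two_nilpotent
    {G : Type*} [Group G] [Finite G]
    (hna : ¬ ∀ a b : G, a * b = b * a)
    (hclass2 : ∀ a b : G ⧸ Subgroup.center G, a * b = b * a)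
    {H : Type*} [NormedAddCommGroup H] [InnerProductSpace ℂ H]
    [FiniteDimensional ℂ H] [Nontrivial H]
    (π : G →* (H ≃ₗᵢ[ℂ] H))
    (hirr : ∀ V : Submodule ℂ H, (∀ g : G, ∀ v ∈ V, π g v ∈ V) → V = ⊥ ∨ V = ⊤) :
    ∃ η : H, DoesPhaseRetrieval (fun g : G => π g η) :=
  phase_retrieval_class_two_nilpotent_general hclass2 π hirr
end

section
/- For k = 1, 2, let π_k be a unitary representation of a finite group G_k on a complex Hilbert space H_k, and suppose η_k ∈ H_k does phase retrieval for π_k. Then the vector η₁ ⊗ η₂ does phase retrieval for the outer tensor product representation π₁ ⊗ π₂ of G₁ × G₂ realized on Hilbert–Schmidt operators; concretely, for all bounded linear operators A, B : H₂ → H₁, if |⟨A (π₂(g₂)η₂), π₁(g₁)η₁⟩| = |⟨B (π₂(g₂)η₂), π₁(g₁)η₁⟩| for all (g₁, g₂) ∈ G₁ × G₂, then there exists c ∈ ℂ with |c| = 1 and A = c • B. -/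
/-!
If `‖⟪A (y j), x i⟫‖ = ‖⟪B (y j), x i⟫‖` for all `i, j`, phase retrieval by `(x i)` gives
`A (y j) = c j • B (y j)` column by column, and phase retrieval by `(y j)`, applied to the adjoints,
gives `⟪A w, x i⟫ = e i * ⟪B w, x i⟫` row by row. Two nonzero vectors cannot have disjoint supports
against a phase retrieving family, so any two nonzero columns `B (y j)`, `B (y k)` meet in some
row `i`, whence `conj (c j) = e i = conj (c k)`: the column phases agree, and `A = c • B` on the
spanning set `(y j)`.
-/

open scoped InnerProductSpace

namespace DoesPhaseRetrieval

variable {H : Type*} [NormedAddCommGroup H] [InnerProductSpace ℂ H] {I : Type*} {x : I → H}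

theorem eq_zero_of_forall_inner_eq_zero (hx : DoesPhaseRetrieval x) {f : H}
    (hf : ∀ i, ⟪f, x i⟫_ℂ = 0) : f = 0 := by
  obtain ⟨c, -, hc⟩ := hx f 0 fun i => by simp [hf i]
  simpa using hc

theorem exists_inner_ne_zero (hx : DoesPhaseRetrieval x) {f : H} (hf : f ≠ 0) :
    ∃ i, ⟪f, x i⟫_ℂ ≠ 0 := by
  by_contra! h
  exact hf (hx.eq_zero_of_forall_inner_eq_zero h)

theorem finiteDimensional [Finite I] (hx : DoesPhaseRetrieval x) : FiniteDimensional ℂ H := by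
  refine FiniteDimensional.of_injective (LinearMap.pi fun i => innerₛₗ ℂ (x i)) ?_
  refine (injective_iff_map_eq_zero _).2 fun f hf => hx.eq_zero_of_forall_inner_eq_zero fun i => ?_
  simpa [inner_eq_zero_symm] using congrFun hf i

theorem dense_span [CompleteSpace H] (hx : DoesPhaseRetrieval x) :
    Dense (Submodule.span ℂ (Set.range x) : Set H) := by
  rw [Submodule.dense_iff_topologicalClosure_eq_top, Submodule.topologicalClosure_eq_top_iff,
    Submodule.eq_bot_iff]
  intro f hf
  refine hx.eq_zero_of_forall_inner_eq_zero fun i => ?_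
  rw [← inner_conj_symm, Submodule.inner_right_of_mem_orthogonal
    (Submodule.subset_span (Set.mem_range_self i)) hf, map_zero]

theorem exists_inner_ne_zero_and_inner_ne_zero (hx : DoesPhaseRetrieval x) {u v : H}
    (hu : u ≠ 0) (hv : v ≠ 0) : ∃ i, ⟪u, x i⟫_ℂ ≠ 0 ∧ ⟪v, x i⟫_ℂ ≠ 0 := by
  by_contra! hdisj
  obtain ⟨μ, -, hμ⟩ := hx (u + v) (u - v) fun i => by
    rcases eq_or_ne ⟪u, x i⟫_ℂ 0 with h | h
    · simp [h]
    · simp [hdisj i h]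
  obtain ⟨i, hi⟩ := hx.exists_inner_ne_zero hu
  have hμ_one : μ = 1 := by
    have h := congrArg (⟪·, x i⟫_ℂ) hμ
    simp only [inner_add_left, inner_sub_left, inner_smul_left, hdisj i hi, add_zero,
      sub_zero] at h
    have hconj : starRingEnd ℂ μ = 1 := mul_right_cancel₀ hi (by rw [one_mul, ← h])
    simpa using congrArg (starRingEnd ℂ) hconj
  subst hμ_one
  rw [one_smul, sub_eq_add_neg, add_right_inj, eq_neg_iff_add_eq_zero, ← two_smul ℂ,
    smul_eq_zero] at hμ
  exact hv (hμ.resolve_left two_ne_zero)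

section Operators

variable {H₁ H₂ : Type*} [NormedAddCommGroup H₁] [InnerProductSpace ℂ H₁] [CompleteSpace H₁]
  [NormedAddCommGroup H₂] [InnerProductSpace ℂ H₂] [CompleteSpace H₂]
  {I J : Type*} {x : I → H₁} {y : J → H₂} {A B : H₂ →L[ℂ] H₁}

open ContinuousLinearMap in
theorem exists_inner_apply_eq_mul (hy : DoesPhaseRetrieval y) {v : H₁}
    (h : ∀ j, ‖⟪A (y j), v⟫_ℂ‖ = ‖⟪B (y j), v⟫_ℂ‖) :
    ∃ e : ℂ, ∀ w, ⟪A w, v⟫_ℂ = e * ⟪B w, v⟫_ℂ := by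
  obtain ⟨e, -, he⟩ := hy (adjoint A v) (adjoint B v) fun j => by
    rw [adjoint_inner_left, adjoint_inner_left, norm_inner_symm, norm_inner_symm v]
    exact h j
  exact ⟨e, fun w => by rw [← adjoint_inner_right, he, inner_smul_right, adjoint_inner_right]⟩

theorem exists_eq_smul_of_norm_inner_eq (hx : DoesPhaseRetrieval x) (hy : DoesPhaseRetrieval y)
    (h : ∀ i j, ‖⟪A (y j), x i⟫_ℂ‖ = ‖⟪B (y j), x i⟫_ℂ‖) : ∃ c : ℂ, ‖c‖ = 1 ∧ A = c • B := by
  choose c hc_norm hc using fun j => hx (A (y j)) (B (y j)) fun i => h i j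
  choose e he using fun i => hy.exists_inner_apply_eq_mul (h i)
  have phase_eq : ∀ j k, B (y j) ≠ 0 → B (y k) ≠ 0 → c j = c k := by
    intro j k hj hk
    obtain ⟨i, hij, hik⟩ := hx.exists_inner_ne_zero_and_inner_ne_zero hj hk
    have row_phase : ∀ l, ⟪B (y l), x i⟫_ℂ ≠ 0 → starRingEnd ℂ (c l) = e i := fun l hl =>
      mul_right_cancel₀ hl (by rw [← he, hc, inner_smul_left])
    exact star_injective ((row_phase j hij).trans (row_phase k hik).symm)
  obtain ⟨c₀, hc₀_norm, hc₀⟩ : ∃ c₀ : ℂ, ‖c₀‖ = 1 ∧ ∀ j, B (y j) ≠ 0 → c j = c₀ := by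
    by_cases hB : ∃ k, B (y k) ≠ 0
    · obtain ⟨k, hk⟩ := hB
      exact ⟨c k, hc_norm k, fun j hj => phase_eq j k hj hk⟩
    · push Not at hB
      exact ⟨1, norm_one, fun j hj => absurd (hB j) hj⟩
  refine ⟨c₀, hc₀_norm, ContinuousLinearMap.ext_on hy.dense_span ?_⟩
  rintro _ ⟨j, rfl⟩
  by_cases hj : B (y j) = 0
  · simp [hc j, hj]
  · rw [hc j, hc₀ j hj, smul_apply]

end Operators

end DoesPhaseRetrieval

/-- If `η₁` does phase retrieval for the unitary representation `π₁` of the finite group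
`G₁` and `η₂` does phase retrieval for `π₂` of `G₂`, then `η₁ ⊗ η₂` does phase retrieval
for the outer tensor product representation of `G₁ × G₂`, realized on operators. -/
theorem phase_retrieval_outer_tensor_product
    {G₁ G₂ : Type*} [Group G₁] [Group G₂] [Finite G₁] [Finite G₂]
    {H₁ : Type*} [NormedAddCommGroup H₁] [InnerProductSpace ℂ H₁]
    {H₂ : Type*} [NormedAddCommGroup H₂] [InnerProductSpace ℂ H₂]
    (π₁ : G₁ →* (H₁ ≃ₗᵢ[ℂ] H₁)) (π₂ : G₂ →* (H₂ ≃ₗᵢ[ℂ] H₂))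
    (η₁ : H₁) (η₂ : H₂)
    (hη₁ : DoesPhaseRetrieval (fun g : G₁ => π₁ g η₁))
    (hη₂ : DoesPhaseRetrieval (fun g : G₂ => π₂ g η₂))
    (A B : H₂ →L[ℂ] H₁)
    (hAB : ∀ g : G₁ × G₂,
      ‖(inner ℂ (A (π₂ g.2 η₂)) (π₁ g.1 η₁) : ℂ)‖ =
        ‖(inner ℂ (B (π₂ g.2 η₂)) (π₁ g.1 η₁) : ℂ)‖) :
    ∃ c : ℂ, ‖c‖ = 1 ∧ A = c • B := by
  have := hη₁.finiteDimensional
  have := hη₂.finiteDimensional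
  exact hη₁.exists_eq_smul_of_norm_inner_eq hη₂ fun g₁ g₂ => hAB (g₁, g₂)
end

section
/- Let p be a prime, let G be a nonabelian finite p-group whose center Z(G) is cyclic, let y ∈ Z₁(G) \ Z(G), and let p^r (r ≥ 1) be the order of the subgroup [G,y] = {[g,y] : g ∈ G} of Z(G). Then the subgroup A generated by {y} ∪ Z(G) is an abelian normal subgroup of G, the coset yZ(G) has order exactly p^r in G/Z(G), and A/Z(G) is the cyclic group generated by yZ(G), of order p^r. -/
/-- The commutator `[x,y] = x⁻¹y⁻¹xy`. -/
def comm' {G : Type*} [Group G] (x y : G) : G := x⁻¹ * y⁻¹ * x * y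

/-- Kirillov's lemma for `p`-groups, part (b): with `y ∈ Z₁(G) \ Z(G)` and `[G,y]` of
order `p^r`, the subgroup `A = ⟨y, Z(G)⟩` is an abelian normal subgroup of `G`, the coset
`yZ(G)` has order `p^r` in `G/Z(G)`, and `A/Z(G)` is the cyclic group generated by
`yZ(G)`, of order `p^r`. -/
theorem p_group_Kirillov_part_b
    {p : ℕ} (hp : p.Prime) {G : Type*} [Group G] [Finite G] (hpG : IsPGroup p G)
    (hna : ¬ ∀ a b : G, a * b = b * a)
    (hcyc : IsCyclic (Subgroup.center G))
    (y : G)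
    (hy1 : (QuotientGroup.mk y : G ⧸ Subgroup.center G) ∈
      Subgroup.center (G ⧸ Subgroup.center G))
    (hy2 : y ∉ Subgroup.center G)
    (K : Subgroup G) (hK : (K : Set G) = {z : G | ∃ g : G, comm' g y = z})
    (hKZ : K ≤ Subgroup.center G)
    (r : ℕ) (hr : 1 ≤ r) (hcard : Nat.card K = p ^ r) :
    (∀ a ∈ Subgroup.closure ({y} ∪ (Subgroup.center G : Set G)),
      ∀ b ∈ Subgroup.closure ({y} ∪ (Subgroup.center G : Set G)), a * b = b * a) ∧
    (Subgroup.closure ({y} ∪ (Subgroup.center G : Set G))).Normal ∧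
    orderOf (QuotientGroup.mk y : G ⧸ Subgroup.center G) = p ^ r ∧
    Subgroup.map (QuotientGroup.mk' (Subgroup.center G))
        (Subgroup.closure ({y} ∪ (Subgroup.center G : Set G))) =
      Subgroup.zpowers (QuotientGroup.mk y : G ⧸ Subgroup.center G) ∧
    Nat.card (Subgroup.zpowers (QuotientGroup.mk y : G ⧸ Subgroup.center G)) = p ^ r := by
  set Z := Subgroup.center G with hZ
  set S : Set G := {y} ∪ (Z : Set G) with hS
  set A := Subgroup.closure S with hA
  -- membership of commutators in K
  have hcommK : ∀ g : G, comm' g y ∈ K := by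
    intro g
    have : comm' g y ∈ (K : Set G) := by rw [hK]; exact ⟨g, rfl⟩
    exact this
  have hcommZ : ∀ g : G, comm' g y ∈ Z := fun g => hKZ (hcommK g)
  -- key: g * y ^ n = y ^ n * g * (comm' g y) ^ n
  have hkey : ∀ (g : G) (n : ℕ), g * y ^ n = y ^ n * g * (comm' g y) ^ n := by
    intro g n
    induction n with
    | zero => simp
    | succ n ih =>
      have hc : ∀ z : G, comm' g y * z = z * comm' g y :=
        fun z => (Subgroup.mem_center_iff.mp (hcommZ g) z).symm
      have h1 : g * y = y * g * comm' g y := by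
        simp only [comm']; group
      calc g * y ^ (n+1) = (g * y ^ n) * y := by rw [pow_succ]; group
        _ = y ^ n * g * (comm' g y) ^ n * y := by rw [ih]
        _ = y ^ n * g * y * (comm' g y) ^ n := by
            rw [mul_assoc (y ^ n * g), mul_assoc (y ^ n * g)]
            congr 1
            exact (Commute.pow_left (hc y) n).eq
        _ = y ^ n * (y * g * comm' g y) * (comm' g y) ^ n := by rw [← h1]; group
        _ = y ^ (n+1) * g * (comm' g y) ^ (n+1) := by rw [pow_succ, pow_succ]; group
  -- y ^ n central iff all commutator n-th powers are 1
  have hpowc : ∀ n : ℕ, y ^ n ∈ Z ↔ ∀ g : G, (comm' g y) ^ n = 1 := by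
    intro n
    constructor
    · intro h g
      have := hkey g n
      have h2 : g * y ^ n = y ^ n * g := (Subgroup.mem_center_iff.mp h g)
      rw [h2] at this
      have h4 := hkey g n
      rw [h2] at h4
      exact mul_left_cancel (a := y ^ n * g)
        (by rw [mul_one]; exact h4.symm)
    · intro h
      rw [Subgroup.mem_center_iff]
      intro g
      have := hkey g n
      rw [h g, mul_one] at this
      exact this
  haveI := hcyc
  -- K is cyclic, pick a generator
  haveI : IsCyclic K := isCyclic_of_surjective (Subgroup.subgroupOfEquivOfLe hKZ)
    (Subgroup.subgroupOfEquivOfLe hKZ).surjective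
  obtain ⟨k, hk⟩ := this.exists_generator
  have hko : orderOf k = p ^ r := by
    rw [orderOf_eq_card_of_forall_mem_zpowers hk, hcard]
  have hkoG : orderOf (k : G) = p ^ r := by
    rw [← hko]
    exact orderOf_injective K.subtype K.subtype_injective k
  -- order of the coset y Z
  have horder : orderOf (QuotientGroup.mk y : G ⧸ Subgroup.center G) = p ^ r := by
    rw [← hkoG]
    rw [orderOf_eq_orderOf_iff]
    intro n
    have hyq : (QuotientGroup.mk y : G ⧸ Subgroup.center G) ^ n = 1 ↔ y ^ n ∈ Z := by
      rw [← QuotientGroup.mk_pow, QuotientGroup.eq_one_iff]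
    rw [hyq, hpowc n]
    constructor
    · intro h
      have hkmem : (k : G) ∈ (K : Set G) := k.2
      rw [hK] at hkmem
      obtain ⟨g0, hg0⟩ := hkmem
      rw [← hg0]; exact h g0
    · intro h g
      have hmem : (⟨comm' g y, hcommK g⟩ : K) ∈ Subgroup.zpowers k := hk _
      obtain ⟨m, hm⟩ := hmem
      have hcz : comm' g y ∈ Subgroup.zpowers (k : G) := by
        refine ⟨m, ?_⟩
        have := congrArg (Subgroup.subtype K) hm
        simpa using this
      have h1 : orderOf (comm' g y) ∣ orderOf (k : G) :=
        orderOf_dvd_of_mem_zpowers hcz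
      have h2 : orderOf (k : G) ∣ n := orderOf_dvd_of_pow_eq_one h
      exact orderOf_dvd_iff_pow_eq_one.mp (h1.trans h2)
  -- abelian
  have habel : ∀ a ∈ A, ∀ b ∈ A, a * b = b * a := by
    intro a ha b hb
    refine Subgroup.closure_induction₂
      (p := fun a b _ _ => Commute a b) ?_ ?_ ?_ ?_ ?_ ?_ ?_ ha hb
    · rintro s t (rfl | hs) (rfl | ht)
      · exact Commute.refl _
      · exact Subgroup.mem_center_iff.mp ht s
      · exact (Subgroup.mem_center_iff.mp hs t).symm
      · exact (Subgroup.mem_center_iff.mp hs t).symm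
    · exact fun x _ => Commute.one_left x
    · exact fun x _ => Commute.one_right x
    · exact fun _ _ _ _ _ _ h1 h2 => h1.mul_left h2
    · exact fun _ _ _ _ _ _ h1 h2 => h1.mul_right h2
    · exact fun _ _ _ _ h => h.inv_left
    · exact fun _ _ _ _ h => h.inv_right
  -- normal
  have hnormal : A.Normal := by
    constructor
    intro n hn g
    refine Subgroup.closure_induction (p := fun a _ => g * a * g⁻¹ ∈ A)
      ?_ ?_ ?_ ?_ hn
    · rintro x (rfl | hx)
      · have hw : (comm' g⁻¹ x)⁻¹ ∈ Z := Z.inv_mem (hcommZ g⁻¹)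
        have heq : g * x * g⁻¹ = x * (comm' g⁻¹ x)⁻¹ := by
          simp only [comm']; group
        rw [heq]
        exact mul_mem (Subgroup.subset_closure (Or.inl rfl))
          (Subgroup.subset_closure (Or.inr hw))
      · have : g * x * g⁻¹ = x := by
          rw [Subgroup.mem_center_iff.mp hx g]; group
        rw [this]
        exact Subgroup.subset_closure (Or.inr hx)
    · simpa using A.one_mem
    · intro a b _ _ h1 h2
      have : g * (a * b) * g⁻¹ = (g * a * g⁻¹) * (g * b * g⁻¹) := by group
      rw [this]; exact mul_mem h1 h2
    · intro a _ h1
      have : g * a⁻¹ * g⁻¹ = (g * a * g⁻¹)⁻¹ := by group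
      rw [this]; exact inv_mem h1
  -- image in the quotient
  have hmap : Subgroup.map (QuotientGroup.mk' Z) A =
      Subgroup.zpowers (QuotientGroup.mk y : G ⧸ Subgroup.center G) := by
    rw [hA, MonoidHom.map_closure]
    apply le_antisymm
    · rw [Subgroup.closure_le]
      rintro x ⟨s, hs, rfl⟩
      rcases hs with rfl | hs
      · exact Subgroup.mem_zpowers _
      · have : (QuotientGroup.mk' Z) s = 1 := (QuotientGroup.eq_one_iff s).mpr hs
        rw [this]; exact one_mem _
    · rw [Subgroup.zpowers_eq_closure]
      apply Subgroup.closure_mono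
      rintro x rfl
      exact ⟨y, Or.inl rfl, rfl⟩
  exact ⟨habel, hnormal, horder, hmap, by rw [Nat.card_zpowers, horder]⟩
end

section
/- Let p be a prime, let G be a nonabelian finite p-group whose center Z(G) is cyclic, let y ∈ Z₁(G) \ Z(G), and let p^r (r ≥ 1) be the order of the subgroup [G,y] = {[g,y] : g ∈ G} of Z(G). Let G₀ = {w ∈ G : [w,y] = e} be the centralizer of y in G. Then G₀ is a normal subgroup of G, the quotient G/G₀ is cyclic of order p^r, for every x ∈ G such that [x,y] generates [G,y] the coset xG₀ generates G/G₀, and the subgroup A generated by {y} ∪ Z(G) is contained in the center of G₀. -/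
lemma comm'_eq_one_iff {G : Type*} [Group G] (g y : G) :
    comm' g y = 1 ↔ y * g = g * y := by
  unfold comm'
  rw [mul_assoc, mul_assoc, inv_mul_eq_one, eq_comm, inv_mul_eq_iff_eq_mul, eq_comm]

lemma comm'_mul {G : Type*} [Group G] (a b y : G) (hc : ∀ g, g * comm' a y = comm' a y * g) :
    comm' (a*b) y = comm' a y * comm' b y := by
  have h1 : a⁻¹ * y⁻¹ * a = comm' a y * y⁻¹ := by unfold comm'; group
  calc comm' (a*b) y = b⁻¹ * (a⁻¹ * y⁻¹ * a) * b * y := by unfold comm'; group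
    _ = b⁻¹ * (comm' a y * y⁻¹) * b * y := by rw [h1]
    _ = b⁻¹ * comm' a y * y⁻¹ * b * y := by group
    _ = comm' a y * b⁻¹ * y⁻¹ * b * y := by rw [hc b⁻¹]
    _ = comm' a y * comm' b y := by unfold comm'; group

/-- Kirillov's lemma for `p`-groups, part (c): the centralizer `G₀` of `y` is a normal
subgroup of `G` with `G/G₀` cyclic of order `p^r`, generated by `xG₀` for any `x` with
`⟨[x,y]⟩ = [G,y]`, and `A = ⟨y, Z(G)⟩` is contained in the center of `G₀`. -/
theorem p_group_Kirillov_part_c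
    {p : ℕ} (hp : p.Prime) {G : Type*} [Group G] [Finite G] (hpG : IsPGroup p G)
    (hna : ¬ ∀ a b : G, a * b = b * a)
    (hcyc : IsCyclic (Subgroup.center G))
    (y : G)
    (hy1 : (QuotientGroup.mk y : G ⧸ Subgroup.center G) ∈
      Subgroup.center (G ⧸ Subgroup.center G))
    (hy2 : y ∉ Subgroup.center G)
    (K : Subgroup G) (hK : (K : Set G) = {z : G | ∃ g : G, comm' g y = z})
    (hKZ : K ≤ Subgroup.center G)
    (r : ℕ) (hr : 1 ≤ r) (hcard : Nat.card K = p ^ r) :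
    (Subgroup.centralizer {y}).Normal ∧
    Nat.card (G ⧸ Subgroup.centralizer (G := G) {y}) = p ^ r ∧
    (∀ hN : (Subgroup.centralizer (G := G) {y}).Normal,
      letI := hN
      IsCyclic (G ⧸ Subgroup.centralizer (G := G) {y})) ∧
    (∀ hN : (Subgroup.centralizer (G := G) {y}).Normal,
      letI := hN
      ∀ x : G, Subgroup.zpowers (comm' x y) = K →
        Subgroup.zpowers
            (QuotientGroup.mk x : G ⧸ Subgroup.centralizer (G := G) {y}) = ⊤) ∧
    Subgroup.closure ({y} ∪ (Subgroup.center G : Set G)) ≤ Subgroup.centralizer {y} ∧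
    (∀ a ∈ Subgroup.closure ({y} ∪ (Subgroup.center G : Set G)),
      ∀ w ∈ Subgroup.centralizer (G := G) {y}, a * w = w * a) := by
  -- every commutator lies in K
  have hmemK : ∀ g : G, comm' g y ∈ K := by
    intro g
    have : comm' g y ∈ (K : Set G) := by rw [hK]; exact ⟨g, rfl⟩
    exact this
  have hcent : ∀ g : G, ∀ w : G, w * comm' g y = comm' g y * w := by
    intro g w
    exact (Subgroup.mem_center_iff.mp (hKZ (hmemK g)) w)
  -- the homomorphism φ : G →* K, g ↦ [g, y]
  let φ : G →* K := {
    toFun := fun g => ⟨comm' g y, hmemK g⟩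
    map_one' := by
      ext; show comm' 1 y = 1
      unfold comm'; group
    map_mul' := by
      intro a b
      ext
      exact comm'_mul a b y (hcent a) }
  have hφ : ∀ g : G, (φ g : G) = comm' g y := fun _ => rfl
  have hker : φ.ker = Subgroup.centralizer {y} := by
    ext g
    simp only [MonoidHom.mem_ker, Subgroup.mem_centralizer_iff, Set.mem_singleton_iff]
    constructor
    · intro h
      have : comm' g y = 1 := congrArg Subtype.val h
      intro h' hh'
      rw [hh']
      exact (comm'_eq_one_iff g y).mp this
    · intro h
      ext
      exact (comm'_eq_one_iff g y).mpr (h y rfl)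
  have hsurj : Function.Surjective φ := by
    rintro ⟨k, hk⟩
    have hk' : k ∈ (K : Set G) := hk
    rw [hK] at hk'
    obtain ⟨g, hg⟩ := hk'
    exact ⟨g, Subtype.ext hg⟩
  have hNormal : (Subgroup.centralizer (G := G) {y}).Normal := hker ▸ φ.normal_ker
  refine ⟨hNormal, ?_, ?_, ?_, ?_, ?_⟩
  · -- cardinality
    haveI := hNormal
    have e := (QuotientGroup.quotientMulEquivOfEq hker).symm.trans
      (QuotientGroup.quotientKerEquivOfSurjective φ hsurj)
    rw [Nat.card_congr e.toEquiv, hcard]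
  · -- cyclic
    intro hN
    have e := (QuotientGroup.quotientMulEquivOfEq hker).symm.trans
      (QuotientGroup.quotientKerEquivOfSurjective φ hsurj)
    have : IsCyclic K := by
      have e2 := Subgroup.subgroupOfEquivOfLe hKZ
      exact isCyclic_of_surjective e2 e2.surjective
    exact isCyclic_of_surjective e.symm e.symm.surjective
  · -- generator
    intro hN x hx
    rw [eq_top_iff]
    rintro q -
    obtain ⟨g, rfl⟩ := QuotientGroup.mk_surjective q
    have : comm' g y ∈ Subgroup.zpowers (comm' x y) := hx ▸ hmemK g
    obtain ⟨n, hn⟩ := this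
    have hxn : comm' (x ^ n) y = comm' g y := by
      have := φ.map_zpow x n
      have h2 : (φ (x ^ n) : G) = ((φ x) ^ n : K) := by rw [this]
      rw [hφ] at h2
      rw [h2]
      rw [← hn]
      rfl
    have hmem : (x ^ n)⁻¹ * g ∈ Subgroup.centralizer (G := G) {y} := by
      rw [← hker, MonoidHom.mem_ker]
      ext
      show comm' ((x ^ n)⁻¹ * g) y = 1
      have := comm'_mul (x ^ n) ((x ^ n)⁻¹ * g) y (hcent (x ^ n))
      rw [mul_inv_cancel_left] at this
      rw [hxn] at this
      have h3 := mul_left_cancel (a := comm' g y) (b := 1)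
        (c := comm' ((x ^ n)⁻¹ * g) y) (by rw [mul_one]; exact this)
      exact h3.symm
    have heq : (QuotientGroup.mk (x ^ n) : G ⧸ Subgroup.centralizer (G := G) {y})
        = QuotientGroup.mk g := (QuotientGroup.eq).mpr hmem
    rw [← heq, QuotientGroup.mk_zpow]
    exact ⟨n, rfl⟩
  · -- closure ≤ centralizer
    rw [Subgroup.closure_le]
    rintro a (rfl | ha)
    · intro h hh; cases hh; rfl
    · intro h hh; cases hh
      exact Subgroup.mem_center_iff.mp ha y
  · -- A central in G₀
    intro a ha w hw
    have hwc : Subgroup.closure ({y} ∪ (Subgroup.center G : Set G)) ≤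
        Subgroup.centralizer {w} := by
      rw [Subgroup.closure_le]
      rintro b (rfl | hb)
      · intro h hh; cases hh
        exact (hw b rfl).symm
      · intro h hh; cases hh
        exact Subgroup.mem_center_iff.mp hb w
    have := hwc ha
    rw [Subgroup.mem_centralizer_iff] at this
    exact (this w rfl).symm
end

section
/- Let p be a prime, let G be a nonabelian finite p-group whose center Z(G) is cyclic, let y ∈ Z₁(G) \ Z(G), and let x ∈ G be such that z := [x,y] generates the subgroup [G,y] = {[g,y] : g ∈ G} of Z(G), which has order p^r with r ≥ 1. Let G₀ be the centralizer of y in G and let A be the subgroup generated by {y} ∪ Z(G) (an abelian normal subgroup of G). Let χ : A → ℂˣ be a group homomorphism (a character) whose restriction to the subgroup generated by z is injective. Then the stabilizer of χ under the dual action of G, namely {g ∈ G : χ(g⁻¹ a g) = χ(a) for all a ∈ A}, equals G₀. -/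
/-!
Since `g⁻¹ y g = y [g,y]⁻¹`, an element `g` fixing `χ` satisfies `χ([g,y]) = 1`. The commutator
`[g,y]` lies in `[G,y] = ⟨[x,y]⟩`, on which `χ` is injective, so `[g,y] = 1`. Conversely, an
element commuting with `y` centralizes `A = ⟨y, Z(G)⟩` and therefore fixes every character of `A`.
-/

section

variable {G M : Type*} [Group G] [Group M]

theorem comm'_eq_one_iff_mem_centralizer {g y : G} :
    comm' g y = 1 ↔ g ∈ Subgroup.centralizer {y} := by
  rw [Subgroup.mem_centralizer_singleton_iff, comm', mul_assoc, mul_assoc, inv_mul_eq_one,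
    eq_inv_mul_iff_mul_eq, eq_comm]

theorem inv_mul_mul_eq_mul_comm'_inv (g y : G) : g⁻¹ * y * g = y * (comm' g y)⁻¹ := by
  simp only [comm']
  group

namespace Subgroup

theorem closure_singleton_union_center_le_centralizer {g y : G} (h : g ∈ centralizer {y}) :
    closure ({y} ∪ (center G : Set G)) ≤ centralizer {g} :=
  (closure_le _).mpr <| Set.union_subset
    (Set.singleton_subset_iff.mpr <| mem_centralizer_singleton_iff.mpr
      (mem_centralizer_singleton_iff.mp h).symm)
    (center_le_centralizer _)

theorem map_inv_mul_mul_eq_of_le_centralizer {A : Subgroup G} (χ : A →* M) {g : G}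
    (hA : A ≤ centralizer {g}) (a : G) (ha : a ∈ A) (hga : g⁻¹ * a * g ∈ A) :
    χ ⟨g⁻¹ * a * g, hga⟩ = χ ⟨a, ha⟩ := by
  have hconj : g⁻¹ * a * g = a := by
    rw [mul_assoc, mem_centralizer_singleton_iff.mp (hA ha), inv_mul_cancel_left]
  exact congrArg χ (Subtype.ext hconj)

theorem mem_centralizer_of_map_inv_mul_mul_eq {A H : Subgroup G} (χ : A →* M)
    (hχ : ∀ a b : A, (a : G) ∈ H → (b : G) ∈ H → χ a = χ b → a = b)
    {g y : G} (hy : y ∈ A) (hcA : comm' g y ∈ A) (hcH : comm' g y ∈ H)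
    (hg : ∀ (a : G) (ha : a ∈ A) (hga : g⁻¹ * a * g ∈ A), χ ⟨g⁻¹ * a * g, hga⟩ = χ ⟨a, ha⟩) :
    g ∈ centralizer {y} := by
  have hgy : g⁻¹ * y * g ∈ A := by
    rw [inv_mul_mul_eq_mul_comm'_inv]
    exact A.mul_mem hy (A.inv_mem hcA)
  have hsplit : (⟨g⁻¹ * y * g, hgy⟩ : A) = ⟨y, hy⟩ * ⟨(comm' g y)⁻¹, A.inv_mem hcA⟩ :=
    Subtype.ext (inv_mul_mul_eq_mul_comm'_inv g y)
  have hker : χ ⟨(comm' g y)⁻¹, A.inv_mem hcA⟩ = χ 1 := by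
    have := hg y hy hgy
    rwa [hsplit, map_mul, mul_eq_left, ← map_one χ] at this
  have hc : (comm' g y)⁻¹ = 1 := congrArg Subtype.val (hχ _ _ (H.inv_mem hcH) H.one_mem hker)
  exact comm'_eq_one_iff_mem_centralizer.mp (inv_eq_one.mp hc)

end Subgroup

end

theorem dual_action_stabilizer_eq_centralizer_general
    {G : Type*} [Group G]
    (y : G)
    (K : Subgroup G) (hK : (K : Set G) = {z : G | ∃ g : G, comm' g y = z})
    (hKZ : K ≤ Subgroup.center G)
    (x : G) (hx : Subgroup.zpowers (comm' x y) = K)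
    (A : Subgroup G) (hA : A = Subgroup.closure ({y} ∪ (Subgroup.center G : Set G)))
    (χ : A →* ℂˣ)
    (hχ : ∀ a b : A, (a : G) ∈ Subgroup.zpowers (comm' x y) →
      (b : G) ∈ Subgroup.zpowers (comm' x y) → χ a = χ b → a = b) :
    {g : G | ∀ (a : G) (ha : a ∈ A) (hga : g⁻¹ * a * g ∈ A),
        χ ⟨g⁻¹ * a * g, hga⟩ = χ ⟨a, ha⟩} =
      (Subgroup.centralizer {y} : Set G) := by
  subst hA
  rw [hx] at hχ
  ext g
  constructor
  · intro hg
    have hcK : comm' g y ∈ K := by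
      rw [← SetLike.mem_coe, hK]
      exact ⟨g, rfl⟩
    have hcA : comm' g y ∈ Subgroup.closure ({y} ∪ (Subgroup.center G : Set G)) :=
      Subgroup.subset_closure (Or.inr (hKZ hcK))
    exact Subgroup.mem_centralizer_of_map_inv_mul_mul_eq χ hχ
      (Subgroup.subset_closure (Or.inl rfl)) hcA hcK hg
  · intro hg
    exact Subgroup.map_inv_mul_mul_eq_of_le_centralizer χ
      (Subgroup.closure_singleton_union_center_le_centralizer hg)

/-- For a nonabelian finite `p`-group `G` with cyclic center, `y ∈ Z₁(G) \ Z(G)`, and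
`x ∈ G` with `z = [x,y]` generating `[G,y]` (of order `p^r`, `r ≥ 1`): if `χ` is a
character of the abelian normal subgroup `A = ⟨y, Z(G)⟩` that is injective on the subgroup
generated by `z`, then the stabilizer of `χ` under the dual action of `G` is exactly the
centralizer `G₀` of `y`. -/
theorem dual_action_stabilizer_eq_centralizer
    {p : ℕ} (hp : p.Prime) {G : Type*} [Group G] [Finite G] (hpG : IsPGroup p G)
    (hna : ¬ ∀ a b : G, a * b = b * a)
    (hcyc : IsCyclic (Subgroup.center G))
    (y : G)
    (hy1 : (QuotientGroup.mk y : G ⧸ Subgroup.center G) ∈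
      Subgroup.center (G ⧸ Subgroup.center G))
    (hy2 : y ∉ Subgroup.center G)
    (K : Subgroup G) (hK : (K : Set G) = {z : G | ∃ g : G, comm' g y = z})
    (hKZ : K ≤ Subgroup.center G)
    (r : ℕ) (hr : 1 ≤ r) (hcard : Nat.card K = p ^ r)
    (x : G) (hx : Subgroup.zpowers (comm' x y) = K)
    (A : Subgroup G) (hA : A = Subgroup.closure ({y} ∪ (Subgroup.center G : Set G)))
    (hAnormal : A.Normal)
    (χ : A →* ℂˣ)
    (hχ : ∀ a b : A, (a : G) ∈ Subgroup.zpowers (comm' x y) →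
      (b : G) ∈ Subgroup.zpowers (comm' x y) → χ a = χ b → a = b) :
    {g : G | ∀ (a : G) (ha : a ∈ A) (hga : g⁻¹ * a * g ∈ A),
        χ ⟨g⁻¹ * a * g, hga⟩ = χ ⟨a, ha⟩} =
      (Subgroup.centralizer {y} : Set G) :=
  dual_action_stabilizer_eq_centralizer_general y K hK hKZ x hx A hA χ hχ
end

section
/- Let p be a prime, let G be a nonabelian finite p-group whose center Z(G) is cyclic, let y ∈ Z₁(G) \ Z(G), and let x ∈ G be such that z := [x,y] generates the subgroup [G,y] = {[g,y] : g ∈ G} of Z(G), which has order p^r with r ≥ 1. Let G₀ be the centralizer of y in G, let A be the subgroup generated by {y} ∪ Z(G), and let W ⊆ G₀ be a set containing exactly one element of each coset of A in G₀. Then every g ∈ G has a unique factorization g = z' · y^k · w · x^l with z' ∈ Z(G), k, l ∈ {0, 1, …, p^r − 1}, and w ∈ W. -/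
/-- Under the `p`-group Kirillov setup (nonabelian finite `p`-group with cyclic center,
`y ∈ Z₁(G) \\ Z(G)`, `z = [x,y]` generating `[G,y]` of order `p^r`, `G₀` the centralizer
of `y`, `A = ⟨y, Z(G)⟩`), if `W ⊆ G₀` contains exactly one element of each coset of `A`
in `G₀`, then every `g ∈ G` factors uniquely as `g = z' · y^k · w · x^l` with
`z' ∈ Z(G)`, `0 ≤ k, l < p^r` and `w ∈ W`. -/
theorem unique_factorization_Kirillov
    {p : ℕ} (hp : p.Prime) {G : Type*} [Group G] [Finite G] (hpG : IsPGroup p G)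
    (hna : ¬ ∀ a b : G, a * b = b * a)
    (hcyc : IsCyclic (Subgroup.center G))
    (y : G)
    (hy1 : (QuotientGroup.mk y : G ⧸ Subgroup.center G) ∈
      Subgroup.center (G ⧸ Subgroup.center G))
    (hy2 : y ∉ Subgroup.center G)
    (K : Subgroup G) (hK : (K : Set G) = {z : G | ∃ g : G, comm' g y = z})
    (hKZ : K ≤ Subgroup.center G)
    (r : ℕ) (hr : 1 ≤ r) (hcard : Nat.card K = p ^ r)
    (x : G) (hx : Subgroup.zpowers (comm' x y) = K)
    (W : Set G) (hWsub : W ⊆ (Subgroup.centralizer {y} : Set G))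
    (hW : ∀ g ∈ Subgroup.centralizer (G := G) {y},
      ∃! w : G, w ∈ W ∧
        w⁻¹ * g ∈ Subgroup.closure ({y} ∪ (Subgroup.center G : Set G))) :
    ∀ g : G, ∃! q : G × ℕ × G × ℕ,
      q.1 ∈ Subgroup.center G ∧ q.2.1 < p ^ r ∧ q.2.2.1 ∈ W ∧ q.2.2.2 < p ^ r ∧
      g = q.1 * y ^ q.2.1 * q.2.2.1 * x ^ q.2.2.2 := by
  intro g
  set z : G := comm' x y with hzdef
  -- commutators with y lie in the center
  have hcK : ∀ a : G, comm' a y ∈ K := by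
    intro a
    rw [← SetLike.mem_coe, hK]
    exact ⟨a, rfl⟩
  have hcZ : ∀ a : G, comm' a y ∈ Subgroup.center G := fun a => hKZ (hcK a)
  -- basic commutation helpers
  have honemul : ∀ a b : G, a⁻¹ * b⁻¹ * a * b = 1 → a * b = b * a := by
    intro a b h
    have h2 : b * (a * (a⁻¹ * b⁻¹ * a * b)) = b * (a * 1) := by rw [h]
    simpa [mul_assoc] using h2
  have honemul' : ∀ a b : G, a * b = b * a → a⁻¹ * b⁻¹ * a * b = 1 := by
    intro a b h
    calc a⁻¹ * b⁻¹ * a * b = a⁻¹ * (b⁻¹ * (a * b)) := by group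
      _ = a⁻¹ * (b⁻¹ * (b * a)) := by rw [h]
      _ = 1 := by simp [← mul_assoc]
  -- multiplicativity of g ↦ [g,y]
  have key : ∀ a b : G, comm' (a * b) y = comm' a y * comm' b y := by
    intro a b
    have h2 : b⁻¹ * comm' a y = comm' a y * b⁻¹ :=
      (Subgroup.mem_center_iff.mp (hcZ a) b⁻¹)
    calc comm' (a * b) y = b⁻¹ * (a⁻¹ * y⁻¹ * a * y) * (y⁻¹ * b * y) := by
          show (a*b)⁻¹ * y⁻¹ * (a*b) * y = _
          group
      _ = b⁻¹ * comm' a y * (y⁻¹ * b * y) := rfl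
      _ = comm' a y * b⁻¹ * (y⁻¹ * b * y) := by rw [h2]
      _ = comm' a y * comm' b y := by
          show _ = comm' a y * (b⁻¹ * y⁻¹ * b * y)
          group
  have key1 : comm' 1 y = 1 := by simp [comm']
  have hpow : ∀ (a : G) (n : ℕ), comm' (a ^ n) y = comm' a y ^ n := by
    intro a n
    induction n with
    | zero => simpa using key1
    | succ n ih => rw [pow_succ, key, ih, pow_succ]
  have hinv : ∀ a : G, comm' a⁻¹ y = (comm' a y)⁻¹ := by
    intro a
    have h := key a a⁻¹
    rw [mul_inv_cancel, key1] at h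
    exact (inv_eq_of_mul_eq_one_right h.symm).symm
  -- conjugation by powers of y
  have hconj : ∀ (a : G) (n : ℕ), a⁻¹ * (y ^ n)⁻¹ * a * y ^ n = comm' a y ^ n := by
    intro a n
    induction n with
    | zero => simp
    | succ n ih =>
      have h3 : (y ^ n)⁻¹ * a * y ^ n = a * comm' a y ^ n := by
        rw [← ih]; group
      have hcent : y * comm' a y ^ n = comm' a y ^ n * y :=
        Subgroup.mem_center_iff.mp (Subgroup.pow_mem _ (hcZ a) n) y
      calc a⁻¹ * (y ^ (n+1))⁻¹ * a * y ^ (n+1)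
          = a⁻¹ * y⁻¹ * ((y ^ n)⁻¹ * a * y ^ n) * y := by rw [pow_succ]; group
        _ = a⁻¹ * y⁻¹ * (a * comm' a y ^ n) * y := by rw [h3]
        _ = a⁻¹ * y⁻¹ * a * (comm' a y ^ n * y) := by group
        _ = a⁻¹ * y⁻¹ * a * (y * comm' a y ^ n) := by rw [← hcent]
        _ = (a⁻¹ * y⁻¹ * a * y) * comm' a y ^ n := by group
        _ = comm' a y ^ (n+1) := by rw [show a⁻¹ * y⁻¹ * a * y = comm' a y from rfl, ← pow_succ']
  -- order of z
  have hzord : orderOf z = p ^ r := by rw [← Nat.card_zpowers, hx, hcard]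
  have hzpr : z ^ p ^ r = 1 := by rw [← hzord]; exact pow_orderOf_eq_one z
  have hKone : ∀ u : G, u ∈ K → u ^ p ^ r = 1 := by
    intro u hu
    rw [← hx] at hu
    obtain ⟨m, rfl⟩ := hu
    calc (z ^ m) ^ p ^ r = z ^ (m * (p ^ r : ℕ)) := by rw [← zpow_natCast (z ^ m), ← zpow_mul]
      _ = (z ^ ((p ^ r : ℕ) : ℤ)) ^ m := by rw [mul_comm, zpow_mul]
      _ = 1 := by rw [zpow_natCast, hzpr, one_zpow]
  -- y^(p^r) is central
  have hyprZ : y ^ p ^ r ∈ Subgroup.center G := by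
    rw [Subgroup.mem_center_iff]
    intro a
    have h := hconj a (p ^ r)
    rw [hKone _ (hcK a)] at h
    exact honemul a (y ^ p ^ r) h
  -- if y^k central, p^r divides k
  have hyk : ∀ k : ℕ, y ^ k ∈ Subgroup.center G → p ^ r ∣ k := by
    intro k hk
    have h1 : z ^ k = 1 := by
      rw [← hconj x k]
      exact honemul' x (y ^ k) (Subgroup.mem_center_iff.mp hk x)
    rw [← hzord]
    exact orderOf_dvd_of_pow_eq_one h1
  -- injectivity of powers of z below p^r
  have hk_lt_eq : ∀ k l : ℕ, k < p ^ r → l < p ^ r → z ^ k = z ^ l → k = l := by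
    intro k l hk hl he
    have h2 := pow_eq_pow_iff_modEq.mp he
    rw [hzord] at h2
    have h3 : k % p ^ r = l % p ^ r := h2
    rwa [Nat.mod_eq_of_lt hk, Nat.mod_eq_of_lt hl] at h3
  have hprpos : 0 < p ^ r := pow_pos hp.pos r
  have hMne : ((p ^ r : ℕ) : ℤ) ≠ 0 := by positivity
  have hMpos : (0 : ℤ) < ((p ^ r : ℕ) : ℤ) := by positivity
  -- reduce integer exponents of z
  have hzl : ∀ m : ℤ, ∃ l : ℕ, l < p ^ r ∧ z ^ m = z ^ l := by
    intro m
    refine ⟨(m % ((p ^ r : ℕ) : ℤ)).toNat, ?_, ?_⟩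
    · have h1 := Int.emod_lt_of_pos m hMpos
      have h2 := Int.emod_nonneg m hMne
      omega
    · have h0 : z ^ m = z ^ (m % ((p ^ r : ℕ) : ℤ)) := by
        conv_lhs => rw [← Int.mul_ediv_add_emod m ((p ^ r : ℕ) : ℤ)]
        rw [zpow_add, zpow_mul, zpow_natCast, hzpr, one_zpow, one_mul]
      rw [h0, ← zpow_natCast z, Int.toNat_of_nonneg (Int.emod_nonneg m hMne)]
  -- structure of A
  have hAstruct : ∀ a : G, a ∈ Subgroup.closure ({y} ∪ (Subgroup.center G : Set G)) →
      ∃ z' ∈ Subgroup.center G, ∃ n : ℤ, a = z' * y ^ n := by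
    intro a ha
    induction ha using Subgroup.closure_induction with
    | mem u hu =>
      rcases hu with hu | hu
      · exact ⟨1, one_mem _, 1, by simp [Set.mem_singleton_iff.mp hu]⟩
      · exact ⟨u, hu, 0, by simp⟩
    | one => exact ⟨1, one_mem _, 0, by simp⟩
    | mul u v hu hv ihu ihv =>
      obtain ⟨z₁, hz₁, m, rfl⟩ := ihu
      obtain ⟨z₂, hz₂, n, rfl⟩ := ihv
      refine ⟨z₁ * z₂, mul_mem hz₁ hz₂, m + n, ?_⟩
      have hcr : y ^ m * z₂ = z₂ * y ^ m := Subgroup.mem_center_iff.mp hz₂ (y ^ m)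
      calc z₁ * y ^ m * (z₂ * y ^ n) = z₁ * (y ^ m * z₂) * y ^ n := by group
        _ = z₁ * (z₂ * y ^ m) * y ^ n := by rw [hcr]
        _ = z₁ * z₂ * y ^ (m + n) := by rw [zpow_add]; group
    | inv u hu ihu =>
      obtain ⟨z₁, hz₁, m, rfl⟩ := ihu
      refine ⟨z₁⁻¹, inv_mem hz₁, -m, ?_⟩
      have hcr : y ^ (-m) * z₁⁻¹ = z₁⁻¹ * y ^ (-m) :=
        Subgroup.mem_center_iff.mp (inv_mem hz₁) (y ^ (-m))
      rw [mul_inv_rev, ← zpow_neg, hcr]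
  have hAstructN : ∀ a : G, a ∈ Subgroup.closure ({y} ∪ (Subgroup.center G : Set G)) →
      ∃ z' ∈ Subgroup.center G, ∃ k : ℕ, k < p ^ r ∧ a = z' * y ^ k := by
    intro a ha
    obtain ⟨z', hz', n, rfl⟩ := hAstruct a ha
    set M : ℤ := ((p ^ r : ℕ) : ℤ) with hM
    set k : ℕ := (n % M).toNat with hkdef
    have hk1 : (k : ℤ) = n % M := Int.toNat_of_nonneg (Int.emod_nonneg n hMne)
    have hklt : k < p ^ r := by
      have h1 := Int.emod_lt_of_pos n hMpos
      have h2 := Int.emod_nonneg n hMne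
      omega
    have hdvd : M ∣ (n - (k : ℤ)) := by
      refine ⟨n / M, ?_⟩
      have := Int.mul_ediv_add_emod n M
      omega
    obtain ⟨q, hq⟩ := hdvd
    have hyq : y ^ (n - (k : ℤ)) ∈ Subgroup.center G := by
      rw [hq, zpow_mul, hM, zpow_natCast]
      exact Subgroup.zpow_mem _ hyprZ q
    refine ⟨z' * y ^ (n - (k : ℤ)), mul_mem hz' hyq, k, hklt, ?_⟩
    rw [mul_assoc, ← zpow_natCast y k, ← zpow_add, sub_add_cancel]
  -- uniqueness of z' * y^k form
  have hZYuniq : ∀ z₁ z₂ : G, z₁ ∈ Subgroup.center G → z₂ ∈ Subgroup.center G →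
      ∀ k₁ k₂ : ℕ, k₁ < p ^ r → k₂ < p ^ r → z₁ * y ^ k₁ = z₂ * y ^ k₂ →
      z₁ = z₂ ∧ k₁ = k₂ := by
    have aux : ∀ z₁ z₂ : G, z₁ ∈ Subgroup.center G → z₂ ∈ Subgroup.center G →
        ∀ k₁ k₂ : ℕ, k₁ ≤ k₂ → k₂ < p ^ r → z₁ * y ^ k₁ = z₂ * y ^ k₂ → k₁ = k₂ := by
      intro z₁ z₂ h1 h2 k₁ k₂ hle hlt he
      have h3 : y ^ (k₂ - k₁) * y ^ k₁ = y ^ k₂ := by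
        rw [← pow_add, Nat.sub_add_cancel hle]
      have h4 : z₂⁻¹ * (z₁ * y ^ k₁) = y ^ k₂ := by
        rw [he]; simp [← mul_assoc]
      have h4' : (z₂⁻¹ * z₁) * y ^ k₁ = y ^ (k₂ - k₁) * y ^ k₁ := by
        rw [h3, ← h4, mul_assoc]
      have h5 : z₂⁻¹ * z₁ = y ^ (k₂ - k₁) := mul_right_cancel h4'
      have h6 : y ^ (k₂ - k₁) ∈ Subgroup.center G :=
        h5 ▸ mul_mem (inv_mem h2) h1
      have h7 := hyk _ h6
      have h8 : k₂ - k₁ = 0 := Nat.eq_zero_of_dvd_of_lt h7 (by omega)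
      omega
    intro z₁ z₂ h1 h2 k₁ k₂ hk₁ hk₂ he
    have hkk : k₁ = k₂ := by
      rcases le_total k₁ k₂ with h | h
      · exact aux z₁ z₂ h1 h2 k₁ k₂ h hk₂ he
      · exact (aux z₂ z₁ h2 h1 k₂ k₁ h hk₁ he.symm).symm
    subst hkk
    exact ⟨mul_right_cancel he, rfl⟩
  -- centralizer facts
  have hswap : ∀ u w₀ : G, u ∈ Subgroup.center G →
      w₀ ∈ Subgroup.centralizer ({y} : Set G) → ∀ k : ℕ,
      w₀ * (u * y ^ k) = u * y ^ k * w₀ := by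
    intro u w₀ hu hw₀ k
    have c1 : w₀ * u = u * w₀ := Subgroup.mem_center_iff.mp hu w₀
    have hyw : y * w₀ = w₀ * y := Subgroup.mem_centralizer_iff.mp hw₀ y rfl
    have c2 : y ^ k * w₀ = w₀ * y ^ k := ((show Commute y w₀ from hyw).pow_left k)
    calc w₀ * (u * y ^ k) = (w₀ * u) * y ^ k := by group
      _ = (u * w₀) * y ^ k := by rw [c1]
      _ = u * (w₀ * y ^ k) := by group
      _ = u * (y ^ k * w₀) := by rw [← c2]
      _ = u * y ^ k * w₀ := by group
  -- existence
  have hcg : comm' g y ∈ Subgroup.zpowers z := by rw [hx]; exact hcK g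
  obtain ⟨m, hm⟩ := hcg
  have hm' : z ^ m = comm' g y := hm
  obtain ⟨l, hl, hzl'⟩ := hzl m
  have hgl : comm' g y = z ^ l := by rw [← hm', hzl']
  set g₀ : G := g * (x ^ l)⁻¹ with hg₀
  have hg₀c : comm' g₀ y = 1 := by
    rw [hg₀, key, hinv, hpow, hgl, ← hzdef, mul_inv_cancel]
  have hg₀C : g₀ ∈ Subgroup.centralizer ({y} : Set G) := by
    rw [Subgroup.mem_centralizer_iff]
    intro h hh
    rw [Set.mem_singleton_iff] at hh
    rw [hh]
    exact (honemul g₀ y hg₀c).symm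
  obtain ⟨w, ⟨hwW, hwA⟩, hwuniq⟩ := hW g₀ hg₀C
  obtain ⟨z', hz', k, hk, hzk⟩ := hAstructN _ hwA
  have hwC : w ∈ Subgroup.centralizer ({y} : Set G) := hWsub hwW
  have h1 : g₀ = w * (z' * y ^ k) := by rw [← hzk]; group
  have hg₀fact : g₀ = z' * y ^ k * w := by rw [h1, hswap z' w hz' hwC k]
  have hgfact : g = z' * y ^ k * w * x ^ l := by
    have hgg : g = g₀ * x ^ l := by rw [hg₀]; group
    rw [hgg, hg₀fact]
  refine ⟨(z', k, w, l), ⟨hz', hk, hwW, hl, hgfact⟩, ?_⟩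
  -- uniqueness
  rintro ⟨z₂, k₂, w₂, l₂⟩ ⟨hz₂, hk₂, hw₂, hl₂, hfac₂⟩
  have hw₂C : w₂ ∈ Subgroup.centralizer ({y} : Set G) := hWsub hw₂
  have eyy : comm' y y = 1 := by simp [comm']
  have e₂ : comm' z₂ y = 1 := honemul' z₂ y (Subgroup.mem_center_iff.mp hz₂ y).symm
  have ew : comm' w₂ y = 1 := honemul' w₂ y (Subgroup.mem_centralizer_iff.mp hw₂C y rfl).symm
  have hc2 : comm' g y = z ^ l₂ := by
    rw [hfac₂, key, key, key, e₂, ew, hpow y k₂, eyy, one_pow, hpow x l₂, ← hzdef]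
    simp
  have hll : l₂ = l := hk_lt_eq l₂ l hl₂ hl (by rw [← hc2, hgl])
  subst hll
  have hmid : z₂ * y ^ k₂ * w₂ = z' * y ^ k * w :=
    mul_right_cancel (hfac₂.symm.trans hgfact)
  have hg₀fact₂ : g₀ = z₂ * y ^ k₂ * w₂ := hg₀fact.trans hmid.symm
  have hw₂A : w₂⁻¹ * g₀ ∈ Subgroup.closure ({y} ∪ (Subgroup.center G : Set G)) := by
    have hswap₂ : w₂⁻¹ * (z₂ * y ^ k₂) = (z₂ * y ^ k₂) * w₂⁻¹ :=
      hswap z₂ w₂⁻¹ hz₂ (inv_mem hw₂C) k₂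
    have : w₂⁻¹ * g₀ = z₂ * y ^ k₂ := by
      rw [hg₀fact₂]
      calc w₂⁻¹ * (z₂ * y ^ k₂ * w₂) = (w₂⁻¹ * (z₂ * y ^ k₂)) * w₂ := by group
        _ = ((z₂ * y ^ k₂) * w₂⁻¹) * w₂ := by rw [hswap₂]
        _ = z₂ * y ^ k₂ := by group
    rw [this]
    have m1 : z₂ ∈ Subgroup.closure ({y} ∪ (Subgroup.center G : Set G)) :=
      Subgroup.subset_closure (by simp [hz₂])
    have m2 : y ∈ Subgroup.closure ({y} ∪ (Subgroup.center G : Set G)) :=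
      Subgroup.subset_closure (by simp)
    exact mul_mem m1 (pow_mem m2 k₂)
  have hww : w₂ = w := hwuniq w₂ ⟨hw₂, hw₂A⟩
  subst hww
  have hzy : z₂ * y ^ k₂ = z' * y ^ k := mul_right_cancel hmid
  obtain ⟨hzeq, hkeq⟩ := hZYuniq z₂ z' hz₂ hz' k₂ k hk₂ hk hzy
  subst hzeq
  subst hkeq
  rfl
end

section
/- Let G be a finite group, let π be a unitary representation of G on a complex Hilbert space H of finite dimension d ≥ 1 with |G| ≥ d, and let η ∈ H be such that the family (π(x)η)_{x∈G} is full spark, i.e. for every subset S ⊆ G with |S| = d, the vectors {π(x)η : x ∈ S} are linearly independent. Then p₀(π,η) = (d − 1)/|G|. -/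
/-- `p₀(π,η)`: the maximal proportion of zeros in the matrix coefficients
`V_η f = ⟨f, π(·)η⟩`, over all nonzero `f`. -/
noncomputable def p0Vec {G : Type*} [Group G] [Finite G]
    {H : Type*} [NormedAddCommGroup H] [InnerProductSpace ℂ H]
    (π : G →* (H ≃ₗᵢ[ℂ] H)) (η : H) : ℝ :=
  sSup {t : ℝ | ∃ f : H, f ≠ 0 ∧
    t = 1 - (Nat.card {x : G | (inner ℂ f (π x η) : ℂ) ≠ 0} : ℝ) / (Nat.card G : ℝ)}

/-!
A nonzero `f` vanishes on `π(x)η` exactly when `π(x)η` lies in the hyperplane `fᗮ`, which has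
dimension `d - 1`. Full spark therefore allows at most `d - 1` zeros of `V_η f`. Conversely, any
`d - 1` vectors `π(x)η` span a proper subspace, so some `f ≠ 0` is orthogonal to all of them.
Hence the largest zero set of a `V_η f` has exactly `d - 1` elements.
-/

open Finset Module

def FullSpark (R : Type*) {ι M : Type*} [Semiring R] [AddCommMonoid M] [Module R M]
    (v : ι → M) : Prop :=
  ∀ S : Finset ι, #S = finrank R M → LinearIndependent R (fun s : S => v s)

section InnerProductSpace

variable {𝕜 E ι : Type*} [RCLike 𝕜] [NormedAddCommGroup E] [InnerProductSpace 𝕜 E]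
  [FiniteDimensional 𝕜 E]

theorem LinearIndependent.card_lt_finrank_of_inner_eq_zero [Fintype ι] {v : ι → E}
    (hv : LinearIndependent 𝕜 v) {f : E} (hf : f ≠ 0) (h : ∀ i, inner 𝕜 f (v i) = 0) :
    Fintype.card ι < finrank 𝕜 E := by
  have hmem : ∀ i, v i ∈ (𝕜 ∙ f)ᗮ := fun i =>
    (Submodule.mem_orthogonal_singleton_iff_inner_right).2 (h i)
  have hv' : LinearIndependent 𝕜 (fun i => (⟨v i, hmem i⟩ : (𝕜 ∙ f)ᗮ)) :=
    .of_comp (𝕜 ∙ f)ᗮ.subtype hv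
  have hrank := (𝕜 ∙ f).finrank_add_finrank_orthogonal
  rw [finrank_span_singleton hf] at hrank
  have hcard := hv'.fintype_card_le_finrank
  omega

theorem exists_ne_zero_forall_inner_eq_zero (v : ι → E) (S : Finset ι)
    (hS : #S < finrank 𝕜 E) : ∃ f ≠ 0, ∀ i ∈ S, inner 𝕜 f (v i) = 0 := by
  set K := Submodule.span 𝕜 (Set.range fun i : S => v i)
  have hK : K ≠ ⊤ := by
    intro h
    have hrank := finrank_range_le_card (R := 𝕜) fun i : S => v i
    change finrank 𝕜 K ≤ _ at hrank
    rw [h, finrank_top, Fintype.card_coe] at hrank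
    omega
  obtain ⟨f, hfK, hf⟩ :=
    Submodule.exists_mem_ne_zero_of_ne_bot (mt Submodule.orthogonal_eq_bot_iff.1 hK)
  exact ⟨f, hf, fun i hi =>
    (Submodule.mem_orthogonal' K f).1 hfK _ (Submodule.subset_span ⟨⟨i, hi⟩, rfl⟩)⟩

variable [DecidableEq 𝕜] [Fintype ι] {v : ι → E}

theorem FullSpark.card_inner_eq_zero_lt_finrank (hv : FullSpark 𝕜 v) {f : E} (hf : f ≠ 0) :
    #{i | inner 𝕜 f (v i) = 0} < finrank 𝕜 E := by
  by_contra! hle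
  obtain ⟨S, hSzero, hS⟩ := exists_subset_card_eq hle
  have hlt := (hv S hS).card_lt_finrank_of_inner_eq_zero hf fun i => (mem_filter.1 (hSzero i.2)).2
  rw [Fintype.card_coe] at hlt
  omega

theorem FullSpark.exists_card_inner_eq_zero_eq (hv : FullSpark 𝕜 v) (hE : 1 ≤ finrank 𝕜 E)
    (hι : finrank 𝕜 E - 1 ≤ Fintype.card ι) :
    ∃ f ≠ 0, #{i | inner 𝕜 f (v i) = 0} = finrank 𝕜 E - 1 := by
  obtain ⟨S, -, hS⟩ := exists_subset_card_eq (s := univ) (n := finrank 𝕜 E - 1) hι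
  obtain ⟨f, hf, hfS⟩ := exists_ne_zero_forall_inner_eq_zero (𝕜 := 𝕜) v S (by omega)
  have hSzero : S ⊆ ({i | inner 𝕜 f (v i) = 0} : Finset ι) := fun i hi =>
    mem_filter.2 ⟨mem_univ i, hfS i hi⟩
  have hge := card_le_card hSzero
  have hlt := hv.card_inner_eq_zero_lt_finrank hf
  exact ⟨f, hf, by omega⟩

end InnerProductSpace

theorem one_sub_natCard_div_natCard {α : Type*} [Fintype α] [Nonempty α] (p : α → Prop)
    [DecidablePred p] :
    1 - (Nat.card {x | p x} : ℝ) / Nat.card α = #{x | ¬p x} / Nat.card α := by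
  have hsplit := card_filter_add_card_filter_not (s := univ) p
  have hp : Nat.card {x | p x} = #{x | p x} := by
    simp [Nat.card_eq_fintype_card, Fintype.card_subtype]
  rw [hp, Nat.card_eq_fintype_card, ← card_univ, ← hsplit]
  have hpos : (0 : ℝ) < #({x | p x} : Finset α) + #({x | ¬p x} : Finset α) := by
    exact_mod_cast hsplit ▸ card_pos.2 univ_nonempty
  push_cast
  field_simp
  ring

theorem p0Vec_eq_of_card_inner_eq_zero {G : Type*} [Group G] [Fintype G]
    {H : Type*} [NormedAddCommGroup H] [InnerProductSpace ℂ H]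
    {π : G →* (H ≃ₗᵢ[ℂ] H)} {η : H} {m : ℕ}
    (hle : ∀ f ≠ 0, #{x | inner ℂ f (π x η) = 0} ≤ m)
    (hex : ∃ f ≠ 0, #{x | inner ℂ f (π x η) = 0} = m) :
    p0Vec π η = m / Nat.card G := by
  have hzeros (f : H) : 1 - (Nat.card {x : G | inner ℂ f (π x η) ≠ 0} : ℝ) / Nat.card G =
      #{x | inner ℂ f (π x η) = 0} / Nat.card G := by
    rw [one_sub_natCard_div_natCard]
    simp only [not_not]
  refine IsGreatest.csSup_eq ⟨?_, ?_⟩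
  · obtain ⟨f, hf, hm⟩ := hex
    exact ⟨f, hf, by rw [hzeros, hm]⟩
  · rintro t ⟨f, hf, rfl⟩
    rw [hzeros]
    gcongr
    exact hle f hf

/-- If the orbit `(π(x)η)_{x ∈ G}` is full spark (every `d = dim H` of its members are
linearly independent), then `p₀(π,η) = (d-1)/|G|`. -/
theorem p0_of_full_spark
    {G : Type*} [Group G] [Fintype G]
    {H : Type*} [NormedAddCommGroup H] [InnerProductSpace ℂ H] [FiniteDimensional ℂ H]
    (π : G →* (H ≃ₗᵢ[ℂ] H)) (η : H)
    (hd : 1 ≤ Module.finrank ℂ H)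
    (hGd : Module.finrank ℂ H ≤ Fintype.card G)
    (hspark : ∀ S : Finset G, S.card = Module.finrank ℂ H →
      LinearIndependent ℂ (fun s : S => π (s : G) η)) :
    p0Vec π η = ((Module.finrank ℂ H : ℝ) - 1) / (Nat.card G : ℝ) := by
  have hv : FullSpark ℂ fun x => π x η := hspark
  rw [p0Vec_eq_of_card_inner_eq_zero (m := finrank ℂ H - 1)
    (fun f hf => Nat.le_sub_one_of_lt (hv.card_inner_eq_zero_lt_finrank hf))
    (hv.exists_card_inner_eq_zero_eq hd (by omega)), Nat.cast_sub hd, Nat.cast_one]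
end
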